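/- arXiv:1602.04381 — 6 statements merged into one kernel-verified Lean document; each statement's English description precedes it below -/
import Mathlib

section
/- For all integers x ≥ 2 and y ≥ 1, (1 + y(1+√2))/√(x² + y²) ≤ √((1+√2)² + 1/4), and this last quantity is strictly less than (3 + 2√2)/√5. -/
/-! With `a = 1 + √2`, Cauchy–Schwarz for the vectors `(a, 1/2)` and `(y, 2)` gives
`(1 + a y)² ≤ (a² + 1/4)(y² + 4) ≤ (a² + 1/4)(x² + y²)` as soon as `x² ≥ 4`.
The numerical comparison reduces, via `a² = 3 + 2√2`, to `b² > 5b + 5/4` for `b = 3 + 2√2 > 5.8`. -/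

namespace Real

lemma one_add_mul_sq_le_of_four_le_sq {a x y : ℝ} (hx : 4 ≤ x ^ 2) :
    (1 + a * y) ^ 2 ≤ (a ^ 2 + 1 / 4) * (x ^ 2 + y ^ 2) := by
  -- the gap is `(y/2 - 2a)² + (a² + 1/4)(x² - 4)`
  nlinarith [sq_nonneg (y / 2 - 2 * a), sq_nonneg a]

lemma one_add_mul_div_sqrt_le {a x y : ℝ} (hx : 4 ≤ x ^ 2) :
    (1 + a * y) / √(x ^ 2 + y ^ 2) ≤ √(a ^ 2 + 1 / 4) := by
  rw [div_le_iff₀ (sqrt_pos.mpr (by positivity)), ← sqrt_mul (by positivity)]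
  calc 1 + a * y ≤ |1 + a * y| := le_abs_self _
    _ = √((1 + a * y) ^ 2) := (sqrt_sq_eq_abs _).symm
    _ ≤ √((a ^ 2 + 1 / 4) * (x ^ 2 + y ^ 2)) :=
      sqrt_le_sqrt (one_add_mul_sq_le_of_four_le_sq hx)

lemma one_add_sqrt_two_sq : (1 + √2) ^ 2 = 3 + 2 * √2 := by
  nlinarith [sq_sqrt (show (0 : ℝ) ≤ 2 by norm_num)]

lemma sqrt_add_quarter_lt_div_sqrt_five {b : ℝ} (hb : 5.8 < b) : √(b + 1 / 4) < b / √5 := by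
  rw [lt_div_iff₀ (by positivity), ← sqrt_mul (by positivity)]
  calc √((b + 1 / 4) * 5) < √(b ^ 2) := sqrt_lt_sqrt (by positivity) (by nlinarith)
    _ = b := sqrt_sq (by positivity)

lemma five_point_eight_lt_three_add_two_mul_sqrt_two : (5.8 : ℝ) < 3 + 2 * √2 := by
  nlinarith [sq_sqrt (show (0 : ℝ) ≤ 2 by norm_num), sqrt_nonneg 2]

end Real

theorem stmt_4_general (x y : ℤ) (hx : 2 ≤ x) :
    (1 + (y : ℝ) * (1 + Real.sqrt 2)) / Real.sqrt ((x : ℝ) ^ 2 + (y : ℝ) ^ 2) ≤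
      Real.sqrt ((1 + Real.sqrt 2) ^ 2 + 1 / 4) ∧
    Real.sqrt ((1 + Real.sqrt 2) ^ 2 + 1 / 4) < (3 + 2 * Real.sqrt 2) / Real.sqrt 5 := by
  have hx4 : (4 : ℝ) ≤ (x : ℝ) ^ 2 := by nlinarith [(by exact_mod_cast hx : (2 : ℝ) ≤ x)]
  refine ⟨?_, ?_⟩
  · rw [mul_comm]
    exact Real.one_add_mul_div_sqrt_le hx4
  · rw [Real.one_add_sqrt_two_sq]
    exact Real.sqrt_add_quarter_lt_div_sqrt_five
      Real.five_point_eight_lt_three_add_two_mul_sqrt_two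

theorem stmt_4 (x y : ℤ) (hx : 2 ≤ x) (hy : 1 ≤ y) :
    (1 + (y : ℝ) * (1 + Real.sqrt 2)) / Real.sqrt ((x : ℝ) ^ 2 + (y : ℝ) ^ 2) ≤
      Real.sqrt ((1 + Real.sqrt 2) ^ 2 + 1 / 4) ∧
    Real.sqrt ((1 + Real.sqrt 2) ^ 2 + 1 / 4) < (3 + 2 * Real.sqrt 2) / Real.sqrt 5 :=
  stmt_4_general x y hx
end

section
/- For every positive integer y, (1 + y(1+√2))/√(1 + y²) ≤ (3 + 2√2)/√5, with equality when y = 2. -/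
/-!
With `a = 1 + √2` and `c = 3 + 2√2 = a²`, the squared inequality
`5 (1 + a y)² ≤ c² (1 + y²)` is, after clearing, the polynomial identity
`c² (1 + y²) - 5 (1 + a y)² = 2a (y - 2)(y - 3)`, whose right-hand side is
nonnegative at every integer `y` and vanishes at `y = 2`.
-/

open Real

lemma sq_mul_sub_five_mul_sq_eq (y : ℝ) :
    (3 + 2 * √2) ^ 2 * (1 + y ^ 2) - (1 + y * (1 + √2)) ^ 2 * 5 =
      2 * (1 + √2) * ((y - 2) * (y - 3)) := by
  have h2 : √2 ^ 2 = 2 := sq_sqrt (by norm_num)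
  linear_combination (4 - y ^ 2) * h2

lemma Nat.cast_sub_two_mul_cast_sub_three_nonneg (n : ℕ) :
    0 ≤ ((n : ℝ) - 2) * ((n : ℝ) - 3) := by
  rcases le_or_gt n 2 with h | h
  · have h' : (n : ℝ) ≤ 2 := by exact_mod_cast h
    nlinarith
  · have h' : (3 : ℝ) ≤ n := by exact_mod_cast h
    nlinarith

lemma div_sqrt_one_add_sq_le {y : ℝ} (hy : 0 ≤ y) (h : 0 ≤ (y - 2) * (y - 3)) :
    (1 + y * (1 + √2)) / √(1 + y ^ 2) ≤ (3 + 2 * √2) / √5 := by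
  have hsq : ((1 + y * (1 + √2)) * √5) ^ 2 ≤ ((3 + 2 * √2) * √(1 + y ^ 2)) ^ 2 := by
    rw [mul_pow, mul_pow, sq_sqrt (by norm_num), sq_sqrt (by positivity)]
    nlinarith [sq_mul_sub_five_mul_sq_eq y, sqrt_nonneg 2]
  rw [div_le_div_iff₀ (by positivity) (by positivity)]
  exact (pow_le_pow_iff_left₀ (by positivity) (by positivity) two_ne_zero).mp hsq

theorem stmt_6_general (y : ℕ) :
    (1 + (y : ℝ) * (1 + Real.sqrt 2)) / Real.sqrt (1 + (y : ℝ) ^ 2) ≤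
      (3 + 2 * Real.sqrt 2) / Real.sqrt 5 ∧
    (y = 2 →
      (1 + (y : ℝ) * (1 + Real.sqrt 2)) / Real.sqrt (1 + (y : ℝ) ^ 2) =
        (3 + 2 * Real.sqrt 2) / Real.sqrt 5) := by
  refine ⟨div_sqrt_one_add_sq_le y.cast_nonneg y.cast_sub_two_mul_cast_sub_three_nonneg, ?_⟩
  rintro rfl
  norm_num
  ring

theorem stmt_6 (y : ℕ) (hy : 1 ≤ y) :
    (1 + (y : ℝ) * (1 + Real.sqrt 2)) / Real.sqrt (1 + (y : ℝ) ^ 2) ≤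
      (3 + 2 * Real.sqrt 2) / Real.sqrt 5 ∧
    (y = 2 →
      (1 + (y : ℝ) * (1 + Real.sqrt 2)) / Real.sqrt (1 + (y : ℝ) ^ 2) =
        (3 + 2 * Real.sqrt 2) / Real.sqrt 5) :=
  stmt_6_general y
end

section
/- For all real λ ≥ 1, (2λ + 1 + √3)/√(λ² + λ + 1) ≤ 1 + √3, with equality at λ = 1. -/
open Real

lemma sq_two_mul_add_one_add_sqrt_three_le {l : ℝ} (hl : 1 ≤ l) :
    (2 * l + 1 + √3) ^ 2 ≤ (1 + √3) ^ 2 * (l ^ 2 + l + 1) := by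
  have h3 : √3 ^ 2 = 3 := sq_sqrt (by norm_num)
  have hgap : (1 + √3) ^ 2 * (l ^ 2 + l + 1) - (2 * l + 1 + √3) ^ 2 = 2 * √3 * l * (l - 1) := by
    linear_combination (l ^ 2 + l) * h3
  have : 0 ≤ 2 * √3 * l * (l - 1) := by
    have := sqrt_nonneg 3
    have : 0 ≤ l - 1 := by linarith
    positivity
  linarith

lemma two_mul_add_one_add_sqrt_three_le {l : ℝ} (hl : 1 ≤ l) :
    2 * l + 1 + √3 ≤ (1 + √3) * √(l ^ 2 + l + 1) := by
  rw [← sqrt_sq (by positivity : 0 ≤ 1 + √3), ← sqrt_mul (sq_nonneg _)]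
  exact le_sqrt_of_sq_le (sq_two_mul_add_one_add_sqrt_three_le hl)

theorem stmt_7 :
    (∀ l : ℝ, 1 ≤ l →
      (2 * l + 1 + Real.sqrt 3) / Real.sqrt (l ^ 2 + l + 1) ≤ 1 + Real.sqrt 3) ∧
    (2 * (1 : ℝ) + 1 + Real.sqrt 3) / Real.sqrt ((1 : ℝ) ^ 2 + 1 + 1) = 1 + Real.sqrt 3 := by
  refine ⟨fun l hl => div_le_of_le_mul₀ (sqrt_nonneg _) (by positivity)
    (two_mul_add_one_add_sqrt_three_le hl), ?_⟩
  have hsqrt3 : (0 : ℝ) < √3 := by positivity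
  have hnum : 2 * (1 : ℝ) + 1 + √3 = (1 + √3) * √3 := by
    linear_combination (mul_self_sqrt (by norm_num : (0 : ℝ) ≤ 3)).symm
  rw [hnum, show (1 : ℝ) ^ 2 + 1 + 1 = 3 by norm_num, mul_div_cancel_right₀ _ hsqrt3.ne']
end

section
/- For all integers u ≥ v ≥ 0 with u ≥ 1 and v even, ((1 + √3/2)u + (√3/2)v + √3/2)/√(u² + v² + uv) ≤ 1 + √3. -/
/-! The numerator equals `u + √3 · (u + v + 1) / 2`, and for `u ≥ 1`, `v ≥ 0` both `u` and
`(u + v + 1) / 2` are at most `√(u² + v² + uv)`. -/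

lemma le_sqrt_sq_add_sq_add_mul {u v : ℝ} (hu : 0 ≤ u) (hv : 0 ≤ v) :
    u ≤ √(u ^ 2 + v ^ 2 + u * v) :=
  Real.le_sqrt_of_sq_le (by nlinarith [mul_nonneg hu hv])

lemma add_add_one_div_two_le_sqrt_sq_add_sq_add_mul {u v : ℝ} (hu : 1 ≤ u) (hv : 0 ≤ v) :
    (u + v + 1) / 2 ≤ √(u ^ 2 + v ^ 2 + u * v) :=
  -- `4(u² + v² + uv) - (u + v + 1)² = (3u + 1)(u - 1) + v(3v + 2(u - 1))`
  Real.le_sqrt_of_sq_le (by nlinarith [mul_nonneg hv (sub_nonneg.mpr hu)])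

lemma add_mul_sqrt_three_le {u v : ℝ} (hu : 1 ≤ u) (hv : 0 ≤ v) :
    (1 + √3 / 2) * u + √3 / 2 * v + √3 / 2 ≤ (1 + √3) * √(u ^ 2 + v ^ 2 + u * v) := by
  have h₁ := le_sqrt_sq_add_sq_add_mul (zero_le_one.trans hu) hv
  have h₂ := add_add_one_div_two_le_sqrt_sq_add_sq_add_mul hu hv
  nlinarith [mul_le_mul_of_nonneg_left h₂ (Real.sqrt_nonneg 3)]

theorem stmt_9_general (u v : ℤ) (hv : 0 ≤ v) (hu : 1 ≤ u) :
    ((1 + Real.sqrt 3 / 2) * u + (Real.sqrt 3 / 2) * v + Real.sqrt 3 / 2) /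
        Real.sqrt ((u : ℝ) ^ 2 + (v : ℝ) ^ 2 + u * v) ≤ 1 + Real.sqrt 3 := by
  have hu' : (1 : ℝ) ≤ u := by exact_mod_cast hu
  have hv' : (0 : ℝ) ≤ v := by exact_mod_cast hv
  have hpos : 0 < √((u : ℝ) ^ 2 + (v : ℝ) ^ 2 + u * v) :=
    (zero_lt_one.trans_le hu').trans_le (le_sqrt_sq_add_sq_add_mul (by linarith) hv')
  rw [div_le_iff₀ hpos]
  exact add_mul_sqrt_three_le hu' hv'

theorem stmt_9 (u v : ℤ) (hv : 0 ≤ v) (huv : v ≤ u) (hu : 1 ≤ u) (heven : Even v) :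
    ((1 + Real.sqrt 3 / 2) * u + (Real.sqrt 3 / 2) * v + Real.sqrt 3 / 2) /
        Real.sqrt ((u : ℝ) ^ 2 + (v : ℝ) ^ 2 + u * v) ≤ 1 + Real.sqrt 3 :=
  stmt_9_general u v hv hu
end

section
/- For all integers x ≥ y ≥ 3 with y odd, ((1 + √2/2)x + (√2/2)y + (1 + √2/2))/√(x² + y²) ≤ √((1 + √2/2)² + ((1 + 2√2)/3)²), and this bound is strictly less than (3 + 2√2)/√5. -/
/-!
Cauchy–Schwarz bounds `(1 + √2/2) x + ((1 + 2√2)/3) y` by `√A · √(x² + y²)`, where `A` is the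
square of the claimed constant, and for `y ≥ 3` this linear form dominates the numerator, since
`((1 + 2√2)/3) y - ((√2/2) y + 1 + √2/2) = (2 + √2)(y - 3)/6`. The strict comparison with
`(3 + 2√2)/√5` reduces, after squaring, to `5/2 + 13√2/9 < 17/5 + 12√2/5`.
-/

theorem mul_add_mul_le_sqrt_mul_sqrt (a b x y : ℝ) :
    a * x + b * y ≤ √(a ^ 2 + b ^ 2) * √(x ^ 2 + y ^ 2) := by
  rw [← Real.sqrt_mul (by positivity)]
  exact Real.le_sqrt_of_sq_le (by nlinarith [sq_nonneg (a * y - b * x)])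

theorem half_mul_add_le_of_three_le {t y : ℝ} (ht : -2 ≤ t) (hy : 3 ≤ y) :
    t / 2 * y + (1 + t / 2) ≤ (1 + 2 * t) / 3 * y := by
  nlinarith

theorem stretch_sq_lt :
    (1 + √2 / 2) ^ 2 + ((1 + 2 * √2) / 3) ^ 2 < ((3 + 2 * √2) / √5) ^ 2 := by
  have h2 : √2 ^ 2 = 2 := Real.sq_sqrt (by norm_num)
  rw [div_pow (3 + 2 * √2), Real.sq_sqrt (by norm_num : (0 : ℝ) ≤ 5)]
  nlinarith [Real.sqrt_nonneg 2]

theorem stmt_14_general (x y : ℤ) (hy : 3 ≤ y) :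
    ((1 + Real.sqrt 2 / 2) * x + (Real.sqrt 2 / 2) * y + (1 + Real.sqrt 2 / 2)) /
        Real.sqrt ((x : ℝ) ^ 2 + (y : ℝ) ^ 2) ≤
      Real.sqrt ((1 + Real.sqrt 2 / 2) ^ 2 + ((1 + 2 * Real.sqrt 2) / 3) ^ 2) ∧
    Real.sqrt ((1 + Real.sqrt 2 / 2) ^ 2 + ((1 + 2 * Real.sqrt 2) / 3) ^ 2) <
      (3 + 2 * Real.sqrt 2) / Real.sqrt 5 := by
  have hy' : (3 : ℝ) ≤ y := by exact_mod_cast hy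
  constructor
  · rw [div_le_iff₀ (Real.sqrt_pos.mpr (by positivity))]
    calc (1 + √2 / 2) * x + √2 / 2 * y + (1 + √2 / 2)
        ≤ (1 + √2 / 2) * x + (1 + 2 * √2) / 3 * y := by
          linarith [half_mul_add_le_of_three_le (t := √2) (by linarith [Real.sqrt_nonneg 2]) hy']
      _ ≤ _ := mul_add_mul_le_sqrt_mul_sqrt _ _ _ _
  · exact Real.sqrt_lt' (by positivity) |>.mpr stretch_sq_lt

theorem stmt_14 (x y : ℤ) (hy : 3 ≤ y) (hxy : y ≤ x) (hodd : Odd y) :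
    ((1 + Real.sqrt 2 / 2) * x + (Real.sqrt 2 / 2) * y + (1 + Real.sqrt 2 / 2)) /
        Real.sqrt ((x : ℝ) ^ 2 + (y : ℝ) ^ 2) ≤
      Real.sqrt ((1 + Real.sqrt 2 / 2) ^ 2 + ((1 + 2 * Real.sqrt 2) / 3) ^ 2) ∧
    Real.sqrt ((1 + Real.sqrt 2 / 2) ^ 2 + ((1 + 2 * Real.sqrt 2) / 3) ^ 2) <
      (3 + 2 * Real.sqrt 2) / Real.sqrt 5 :=
  stmt_14_general x y hy
end

section
/- In any plane geometric graph of maximum degree 3 on the vertex set {(0,0), (1,0), (0,1), (-1,0), (0,-1), (1,1), (-1,1), (-1,-1), (1,-1)} ⊂ ℤ², some axis-aligned neighbor pair (p₀, p) with p ∈ {(1,0),(0,1),(-1,0),(0,-1)} and p₀ = (0,0) is not joined by an edge, and any path between them through a third point of the set has length at least 1 + √2; hence the stretch factor of any plane degree-3 spanner of the infinite square lattice is at least 1 + √2. -/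
/-- Euclidean distance in the plane. -/
noncomputable def ed (p q : ℝ × ℝ) : ℝ :=
  Real.sqrt ((p.1 - q.1) ^ 2 + (p.2 - q.2) ^ 2)

/-- Euclidean length of a polygonal path given by its vertex list. -/
noncomputable def pathLen : List (ℝ × ℝ) → ℝ
  | [] => 0
  | [_] => 0
  | p :: q :: rest => ed p q + pathLen (q :: rest)

/-- `xs` is a path from `u` to `v` in the geometric graph with edge relation `E`. -/
def IsPath (E : ℝ × ℝ → ℝ × ℝ → Prop) (u v : ℝ × ℝ) (xs : List (ℝ × ℝ)) : Prop :=
  xs.head? = some u ∧ xs.getLast? = some v ∧ xs.Chain' E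

/-- The edges of `E`, drawn as straight segments, pairwise do not cross:
edges sharing no endpoint have disjoint open segments. -/
def PlaneGraph (E : ℝ × ℝ → ℝ × ℝ → Prop) : Prop :=
  ∀ a b c d : ℝ × ℝ, E a b → E c d → ({a, b} : Set (ℝ × ℝ)) ∩ {c, d} = ∅ →
    openSegment ℝ a b ∩ openSegment ℝ c d = ∅

/-- The 9 points of the square lattice around the origin. -/
def nineSet : Set (ℝ × ℝ) :=
  {(0, 0), (1, 0), (0, 1), (-1, 0), (0, -1), (1, 1), (-1, 1), (-1, -1), (1, -1)}

/-- The square lattice ℤ² as a subset of the plane. -/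
def sqLattice : Set (ℝ × ℝ) := {p | ∃ m n : ℤ, p = ((m : ℝ), (n : ℝ))}

/-!
Both parts rest on one estimate: if `u, v` are adjacent lattice points and `r` is any other
lattice point, then `|ur|²` and `|rv|²` are positive integers of different parity, so
`|ur| + |rv| ≥ 1 + √2`. A path from `u` to `v` that does not use the edge `uv` has a second
vertex `r ∉ {u, v}`, hence length at least `|ur| + |rv|`.

It remains to find a missing unit edge. The degree bound `ncard ≤ 3` only forces this for finite
neighbourhoods, because `Set.ncard` of an infinite set is `0`. So suppose the graph contains the
whole grid; then every neighbourhood is infinite. By planarity an edge of sup-length `≥ 3` must be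
diagonal (otherwise it crosses a grid edge), so every vertex `v` has arbitrarily long edges in some
diagonal direction `w v`. Two distinct vertices on a common line with the same direction would
give overlapping collinear edges, and a pigeonhole count on `[-4, 4]²` produces such a pair.
-/

open Set Filter

def latticePt (a : ℤ × ℤ) : ℝ × ℝ := ((a.1 : ℝ), (a.2 : ℝ))

def unitDirs : Finset (ℤ × ℤ) := {(1, 0), (0, 1), (-1, 0), (0, -1)}

def diagDirs : Finset (ℤ × ℤ) := {1, -1} ×ˢ {1, -1}

def sqDist (a b : ℤ × ℤ) : ℤ := (a.1 - b.1) ^ 2 + (a.2 - b.2) ^ 2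

def ContainsGrid (E : ℝ × ℝ → ℝ × ℝ → Prop) : Prop :=
  ∀ g, ∀ d ∈ unitDirs, E (latticePt g) (latticePt (g + d))

lemma sqLattice_eq_range : sqLattice = range latticePt := by
  ext p
  simp only [sqLattice, mem_ofPred_eq, mem_range, Prod.exists, latticePt, eq_comm]

lemma latticePt_mem_sqLattice (a : ℤ × ℤ) : latticePt a ∈ sqLattice :=
  sqLattice_eq_range ▸ mem_range_self a

lemma latticePt_injective : Function.Injective latticePt := by
  intro a b h
  simp only [latticePt, Prod.mk.injEq, Int.cast_inj] at h
  exact Prod.ext h.1 h.2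

@[simp]
lemma latticePt_add (a b : ℤ × ℤ) : latticePt (a + b) = latticePt a + latticePt b := by
  simp [latticePt]

@[simp]
lemma latticePt_smul (k : ℤ) (a : ℤ × ℤ) : latticePt (k • a) = (k : ℝ) • latticePt a := by
  simp [latticePt]

lemma dot_self_of_mem_unitDirs {e : ℤ × ℤ} (he : e ∈ unitDirs) : e.1 * e.1 + e.2 * e.2 = 1 := by
  simp only [unitDirs, Finset.mem_insert, Finset.mem_singleton] at he
  rcases he with rfl | rfl | rfl | rfl <;> rfl

lemma neg_mem_unitDirs {e : ℤ × ℤ} (he : e ∈ unitDirs) : -e ∈ unitDirs := by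
  simp only [unitDirs, Finset.mem_insert, Finset.mem_singleton] at he
  rcases he with rfl | rfl | rfl | rfl <;> decide

lemma mem_diagDirs {w : ℤ × ℤ} : w ∈ diagDirs ↔ (w.1 = 1 ∨ w.1 = -1) ∧ (w.2 = 1 ∨ w.2 = -1) := by
  simp [diagDirs]

lemma sign_eq_one_or_eq_neg_one {z : ℤ} (hz : z ≠ 0) : z.sign = 1 ∨ z.sign = -1 := by
  rcases hz.lt_or_gt with h | h
  · exact Or.inr (Int.sign_eq_neg_one_of_neg h)
  · exact Or.inl (Int.sign_eq_one_of_pos h)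

lemma sign_mem_unitDirs {z : ℤ} (hz : z ≠ 0) :
    (z.sign, 0) ∈ unitDirs ∧ (0, z.sign) ∈ unitDirs := by
  rcases sign_eq_one_or_eq_neg_one hz with h | h <;> rw [h] <;> decide

lemma ed_eq_dist (p q : ℝ × ℝ) : ed p q = dist (⟨p.1, p.2⟩ : ℂ) ⟨q.1, q.2⟩ :=
  (Complex.dist_mk _ _ _ _).symm

lemma ed_triangle (p q r : ℝ × ℝ) : ed p r ≤ ed p q + ed q r := by
  simp only [ed_eq_dist]
  exact dist_triangle _ _ _

lemma ed_le_pathLen : ∀ {xs : List (ℝ × ℝ)} {a b : ℝ × ℝ},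
    xs.head? = some a → xs.getLast? = some b → ed a b ≤ pathLen xs
  | [], _, _, ha, _ => by simp at ha
  | [x], a, b, ha, hb => by
    obtain rfl : x = a := by simpa using ha
    obtain rfl : x = b := by simpa using hb
    simp [ed, pathLen]
  | x :: y :: rest, a, b, ha, hb => by
    obtain rfl : x = a := by simpa using ha
    rw [List.getLast?_cons_cons] at hb
    have := ed_le_pathLen (xs := y :: rest) rfl hb
    have := ed_triangle x y b
    rw [pathLen]
    linarith

lemma ed_latticePt (a b : ℤ × ℤ) : ed (latticePt a) (latticePt b) = √(sqDist a b : ℝ) := by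
  simp [ed, latticePt, sqDist]

lemma ed_latticePt_add_of_mem_unitDirs (g : ℤ × ℤ) {d : ℤ × ℤ} (hd : d ∈ unitDirs) :
    ed (latticePt g) (latticePt (g + d)) = 1 := by
  have : sqDist g (g + d) = 1 := by
    simp only [sqDist, Prod.fst_add, Prod.snd_add]
    linear_combination dot_self_of_mem_unitDirs hd
  rw [ed_latticePt, this]
  simp

lemma one_le_sqDist {a b : ℤ × ℤ} (h : a ≠ b) : 1 ≤ sqDist a b := by
  have hne : sqDist a b ≠ 0 := by
    rw [sqDist, Ne, add_eq_zero_iff_of_nonneg (sq_nonneg _) (sq_nonneg _)]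
    simp only [pow_eq_zero_iff two_ne_zero, sub_eq_zero]
    exact fun h' => h (Prod.ext h'.1 h'.2)
  have : 0 ≤ sqDist a b := by unfold sqDist; positivity
  omega

lemma sqDist_ne_of_sqDist_eq_one {a b : ℤ × ℤ} (hab : sqDist a b = 1) (r : ℤ × ℤ) :
    sqDist a r ≠ sqDist r b := by
  have key : sqDist a r - sqDist r b =
      2 * ((r.1 - a.1) * (b.1 - a.1) + (r.2 - a.2) * (b.2 - a.2)) - sqDist a b := by
    simp only [sqDist]; ring
  omega

lemma one_add_sqrt_two_le_sqrt_add_sqrt {A B : ℤ} (hA : 1 ≤ A) (hB : 1 ≤ B) (hAB : A ≠ B) :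
    1 + √2 ≤ √(A : ℝ) + √(B : ℝ) := by
  wlog h : A < B generalizing A B
  · rw [add_comm √(A : ℝ)]
    exact this hB hA hAB.symm (lt_of_le_of_ne (not_lt.1 h) hAB.symm)
  have h1 : 1 ≤ √(A : ℝ) := Real.one_le_sqrt.2 (by exact_mod_cast hA)
  have h2 : √2 ≤ √(B : ℝ) := Real.sqrt_le_sqrt (by exact_mod_cast (show 2 ≤ B by omega))
  linarith

lemma one_add_sqrt_two_le_ed_add_ed {u v r : ℝ × ℝ} (hu : u ∈ sqLattice) (hv : v ∈ sqLattice)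
    (hr : r ∈ sqLattice) (huv : ed u v = 1) (hru : r ≠ u) (hrv : r ≠ v) :
    1 + √2 ≤ ed u r + ed r v := by
  rw [sqLattice_eq_range] at hu hv hr
  obtain ⟨a, rfl⟩ := hu
  obtain ⟨b, rfl⟩ := hv
  obtain ⟨c, rfl⟩ := hr
  rw [ed_latticePt, Real.sqrt_eq_one] at huv
  rw [ed_latticePt, ed_latticePt]
  exact one_add_sqrt_two_le_sqrt_add_sqrt (one_le_sqDist fun h => hru (h ▸ rfl))
    (one_le_sqDist fun h => hrv (h ▸ rfl)) (sqDist_ne_of_sqDist_eq_one (by exact_mod_cast huv) c)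

lemma one_add_sqrt_two_le_pathLen {E : ℝ × ℝ → ℝ × ℝ → Prop} (hirr : ∀ p, ¬E p p)
    (hV : ∀ p q, E p q → p ∈ sqLattice ∧ q ∈ sqLattice) {u v : ℝ × ℝ} (hu : u ∈ sqLattice)
    (hv : v ∈ sqLattice) (huv : ed u v = 1) (hnE : ¬E u v) :
    ∀ {xs : List (ℝ × ℝ)}, IsPath E u v xs → 1 + √2 ≤ pathLen xs
  | [], ⟨hh, _, _⟩ => by simp at hh
  | [x], ⟨hh, hl, _⟩ => by
    obtain rfl : x = u := by simpa using hh
    obtain rfl : x = v := by simpa using hl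
    simp [ed] at huv
  | x :: y :: rest, ⟨hh, hl, hc⟩ => by
    obtain rfl : x = u := by simpa using hh
    rw [List.getLast?_cons_cons] at hl
    have hxy : E x y := (List.isChain_cons_cons.1 hc).1
    have hy := one_add_sqrt_two_le_ed_add_ed hu hv (hV _ _ hxy).2 huv
      (fun h => hirr x (h ▸ hxy)) (fun h => hnE (h ▸ hxy))
    have := ed_le_pathLen (xs := y :: rest) rfl hl
    rw [pathLen]
    linarith

lemma infinite_neighbors_of_forall_unitDirs {E : ℝ × ℝ → ℝ × ℝ → Prop} {g : ℤ × ℤ}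
    (hdeg : {q | E (latticePt g) q}.ncard ≤ 3)
    (h : ∀ d ∈ unitDirs, E (latticePt g) (latticePt (g + d))) :
    {q | E (latticePt g) q}.Infinite := by
  intro hfin
  have hsub : ((unitDirs.image fun d => latticePt (g + d) : Finset (ℝ × ℝ)) : Set (ℝ × ℝ)) ⊆
      {q | E (latticePt g) q} := by
    intro q hq
    simp only [Finset.coe_image, mem_image, Finset.mem_coe] at hq
    obtain ⟨d, hd, rfl⟩ := hq
    exact h d hd
  have := Set.ncard_le_ncard hsub hfin
  rw [Set.ncard_coe_finset, Finset.card_image_of_injective unitDirs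
    (show Function.Injective fun d => latticePt (g + d) from
      latticePt_injective.comp (add_right_injective g))] at this
  have : unitDirs.card = 4 := rfl
  omega

lemma mem_openSegment_add_smul {V : Type*} [AddCommGroup V] [Module ℝ V] (b W : V) {α c β : ℝ}
    (hαc : α < c) (hcβ : c < β) : b + c • W ∈ openSegment ℝ (b + α • W) (b + β • W) := by
  have hf : ∀ t : ℝ, AffineMap.lineMap b (b + W) t = b + t • W := fun t => by
    simp [AffineMap.lineMap_apply, add_comm]
  rw [← hf, ← hf, ← hf, ← image_openSegment, openSegment_eq_Ioo (hαc.trans hcβ)]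
  exact mem_image_of_mem _ ⟨hαc, hcβ⟩

namespace PlaneGraph

variable {E : ℝ × ℝ → ℝ × ℝ → Prop}

lemma false_of_mem_openSegment (hP : PlaneGraph E) {a b c d x : ℝ × ℝ} (hab : E a b)
    (hcd : E c d) (hac : a ≠ c) (had : a ≠ d) (hbc : b ≠ c) (hbd : b ≠ d)
    (hx₁ : x ∈ openSegment ℝ a b) (hx₂ : x ∈ openSegment ℝ c d) : False := by
  have hdisj : ({a, b} : Set (ℝ × ℝ)) ∩ {c, d} = ∅ := by
    ext y
    simp only [mem_inter_iff, mem_insert_iff, mem_singleton_iff, mem_empty_iff_false, iff_false]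
    rintro ⟨rfl | rfl, rfl | rfl⟩ <;> contradiction
  exact (hP a b c d hab hcd hdisj).subset ⟨hx₁, hx₂⟩

lemma false_of_collinear_overlap (hP : PlaneGraph E) (b : ℝ × ℝ) {W : ℝ × ℝ} (hW : W ≠ 0)
    {α β γ δ c : ℝ} (hαc : α < c) (hcβ : c < β) (hγc : γ < c) (hcδ : c < δ)
    (hαγ : α ≠ γ) (hαδ : α ≠ δ) (hβγ : β ≠ γ) (hβδ : β ≠ δ)
    (h₁ : E (b + α • W) (b + β • W)) (h₂ : E (b + γ • W) (b + δ • W)) : False := by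
  have hne : ∀ {s t : ℝ}, s ≠ t → b + s • W ≠ b + t • W := fun hst h =>
    hst (smul_left_injective ℝ hW (add_left_cancel h))
  exact hP.false_of_mem_openSegment h₁ h₂ (hne hαγ) (hne hαδ) (hne hβγ) (hne hβδ)
    (mem_openSegment_add_smul b W hαc hcβ) (mem_openSegment_add_smul b W hγc hcδ)

lemma false_of_parallel_long_edges (hP : PlaneGraph E) {P W : ℝ × ℝ} (hW : W ≠ 0) {δ : ℝ}
    (hδ : δ ≠ 0) (h₁ : ∃ᶠ j : ℕ in atTop, E P (P + (j : ℝ) • W))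
    (h₂ : ∃ᶠ j : ℕ in atTop, E (P + δ • W) (P + δ • W + (j : ℝ) • W)) : False := by
  obtain ⟨j, hj, hE₁⟩ := frequently_atTop.1 h₁ (⌈|δ|⌉₊ + 1)
  obtain ⟨k, hk, hE₂⟩ := frequently_atTop.1 h₂ (j + ⌈|δ|⌉₊ + 1)
  have hj' : |δ| + 1 ≤ j := by
    have := Nat.le_ceil |δ|
    have : ((⌈|δ|⌉₊ + 1 : ℕ) : ℝ) ≤ j := by exact_mod_cast hj
    push_cast at this
    linarith
  have hk' : j + |δ| + 1 ≤ k := by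
    have := Nat.le_ceil |δ|
    have : ((j + ⌈|δ|⌉₊ + 1 : ℕ) : ℝ) ≤ k := by exact_mod_cast hk
    push_cast at this
    linarith
  have hmax : max 0 δ ≤ |δ| := max_le (abs_nonneg δ) (le_abs_self δ)
  have hδ₁ := neg_abs_le δ
  have hδ₂ := le_abs_self δ
  -- on the common line `P + t • W`, the two edges cover `t ∈ (0, j)` and `t ∈ (δ, δ + k)`
  refine hP.false_of_collinear_overlap P hW (α := 0) (β := j) (γ := δ) (δ := δ + k)
    (c := max 0 δ + 1 / 2) (by linarith [le_max_left 0 δ]) (by linarith)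
    (by linarith [le_max_right 0 δ]) (by linarith) hδ.symm (by linarith) (by linarith)
    (by linarith) (by simpa using hE₁) (by rwa [add_smul, ← add_assoc])

lemma false_of_frame_edge (hP : PlaneGraph E) (hG : ContainsGrid E) {e f : ℤ × ℤ}
    (he : e ∈ unitDirs) (hf : f ∈ unitDirs) (hef : e.1 * f.1 + e.2 * f.2 = 0) (v : ℤ × ℤ)
    {p q : ℤ} (hp : 3 ≤ p) (hqp : q.natAbs < p)
    (hE : E (latticePt v) (latticePt (v + p • e + q • f))) : False := by
  wlog hq : 0 ≤ q generalizing f q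
  · exact this (neg_mem_unitDirs hf) (by simp; linarith) (q := -q) (by omega)
      (by simpa using hE) (by omega)
  have hee := dot_self_of_mem_unitDirs he
  have hne : ∀ m n m' n' : ℤ, m ≠ m' →
      latticePt (v + m • e + n • f) ≠ latticePt (v + m' • e + n' • f) := by
    intro m n m' n' hm h
    have := congrArg (fun x : ℤ × ℤ => e.1 * x.1 + e.2 * x.2) (latticePt_injective h)
    simp only [Prod.fst_add, Prod.snd_add, Prod.smul_fst, Prod.smul_snd, smul_eq_mul] at this
    exact hm (by linear_combination this + (m' - m) * hee + (n' - n) * hef)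
  have hpR : (3 : ℝ) ≤ p := by exact_mod_cast hp
  rcases hq.eq_or_lt with rfl | hq
  · -- the edge runs along the grid line through `v + e` and `v + 2 • e`
    have hW : latticePt e ≠ 0 := by simpa using hne 0 0 1 0 one_ne_zero.symm
    refine hP.false_of_collinear_overlap (latticePt v) hW (α := 0) (β := p) (γ := 1) (δ := 2)
      (c := 3 / 2) (by norm_num) (by linarith) (by norm_num) (by norm_num) (by norm_num)
      (by norm_num) (by linarith) (by linarith) ?_ ?_
    · simpa only [latticePt_add, latticePt_smul, zero_smul, add_zero] using hE
    convert hG (v + e) e he using 1 <;> simp only [latticePt_add] <;> module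
  · -- the edge crosses the grid edge from `v + e` to `v + e + f`
    have hpR' : (0 : ℝ) < p := by linarith
    have hqR : (0 : ℝ) < q := by exact_mod_cast hq
    have hqpR : (q : ℝ) < p := by exact_mod_cast (show q < p by omega)
    refine hP.false_of_mem_openSegment hE (hG (v + e) f hf)
      (by simpa using hne 0 0 1 0 one_ne_zero.symm) (by simpa using hne 0 0 1 1 one_ne_zero.symm)
      (by simpa using hne p q 1 0 (by omega)) (by simpa [add_assoc] using hne p q 1 1 (by omega))
      (x := latticePt v + latticePt e + ((q : ℝ) / p) • latticePt f) ?_ ?_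
    · convert mem_openSegment_add_smul (latticePt v) ((p : ℝ) • latticePt e + (q : ℝ) • latticePt f)
        (α := 0) (c := 1 / p) (β := 1) (by positivity) (by rw [div_lt_one hpR']; linarith)
        using 1
      · congr 1 <;>
          simp only [latticePt_add, latticePt_smul, zero_smul, one_smul, add_zero, add_assoc]
      · match_scalars <;> field_simp
    · convert mem_openSegment_add_smul (latticePt v + latticePt e) (latticePt f)
        (α := 0) (c := q / p) (β := 1) (by positivity) (by rw [div_lt_one hpR']; linarith)
        using 1
      congr 1 <;> simp only [latticePt_add, zero_smul, one_smul, add_zero]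

lemma natAbs_eq_of_far_edge (hP : PlaneGraph E) (hG : ContainsGrid E) {v a : ℤ × ℤ}
    (hE : E (latticePt v) (latticePt a))
    (hfar : 3 ≤ max (a.1 - v.1).natAbs (a.2 - v.2).natAbs) :
    (a.1 - v.1).natAbs = (a.2 - v.2).natAbs := by
  by_contra hne
  have hx := Int.sign_mul_abs (a.1 - v.1)
  have hy := Int.sign_mul_abs (a.2 - v.2)
  rcases Nat.lt_or_gt_of_ne hne with h | h
  · refine hP.false_of_frame_edge hG (sign_mem_unitDirs (z := a.2 - v.2) (by omega)).2
      (f := (1, 0)) (by decide) (by simp) v (p := (a.2 - v.2).natAbs) (q := a.1 - v.1)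
      (by omega) (by omega) ?_
    convert hE
    ext <;> simp
    linarith
  · refine hP.false_of_frame_edge hG (sign_mem_unitDirs (z := a.1 - v.1) (by omega)).1
      (f := (0, 1)) (by decide) (by simp) v (p := (a.1 - v.1).natAbs) (q := a.2 - v.2)
      (by omega) (by omega) ?_
    convert hE
    ext <;> simp
    linarith

lemma exists_long_diagonal_edges (hP : PlaneGraph E) (hG : ContainsGrid E)
    (hV : ∀ p q, E p q → p ∈ sqLattice ∧ q ∈ sqLattice) {v : ℤ × ℤ}
    (hinf : {q | E (latticePt v) q}.Infinite) :
    ∃ w ∈ diagDirs, ∃ᶠ j : ℕ in atTop, E (latticePt v) (latticePt v + (j : ℝ) • latticePt w) := by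
  by_contra h
  simp only [not_exists, not_and, Nat.frequently_atTop_iff_infinite, not_infinite] at h
  refine hinf ((((finite_Icc (v - (2, 2)) (v + (2, 2))).image latticePt).union
    (diagDirs.finite_toSet.biUnion fun w hw => (h w hw).image
      fun j : ℕ => latticePt v + (j : ℝ) • latticePt w)).subset ?_)
  intro q hq
  obtain ⟨a, rfl⟩ : q ∈ range latticePt := sqLattice_eq_range ▸ (hV _ _ hq).2
  by_cases hfar : 3 ≤ max (a.1 - v.1).natAbs (a.2 - v.2).natAbs
  · have hdiag := hP.natAbs_eq_of_far_edge hG hq hfar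
    set w : ℤ × ℤ := ((a.1 - v.1).sign, (a.2 - v.2).sign)
    have ha : latticePt a = latticePt v + ((a.1 - v.1).natAbs : ℝ) • latticePt w := by
      have hx := Int.sign_mul_natAbs (a.1 - v.1)
      have hy := Int.sign_mul_natAbs (a.2 - v.2)
      have : a = v + ((a.1 - v.1).natAbs : ℤ) • w := by
        ext <;> simp only [w, Prod.fst_add, Prod.snd_add, Prod.smul_fst, Prod.smul_snd,
          smul_eq_mul] <;> grind
      rw [congrArg latticePt this, latticePt_add, latticePt_smul, Int.cast_natCast]
    have hw : w ∈ diagDirs :=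
      mem_diagDirs.2 ⟨sign_eq_one_or_eq_neg_one (by omega), sign_eq_one_or_eq_neg_one (by omega)⟩
    right
    simp only [mem_iUnion, mem_image, Finset.mem_coe]
    exact ⟨w, hw, _, by rw [mem_ofPred_eq, ← ha]; exact hq, ha.symm⟩
  · left
    refine ⟨a, ?_, rfl⟩
    simp only [mem_Icc, Prod.le_def, Prod.fst_add, Prod.snd_add, Prod.fst_sub, Prod.snd_sub]
    omega

lemma exists_missing_grid_edge (hP : PlaneGraph E)
    (hV : ∀ p q, E p q → p ∈ sqLattice ∧ q ∈ sqLattice) (hdeg : ∀ p, {q | E p q}.ncard ≤ 3) :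
    ∃ g, ∃ d ∈ unitDirs, ¬E (latticePt g) (latticePt (g + d)) := by
  by_contra! hG
  choose! w hw hlong using fun v =>
    hP.exists_long_diagonal_edges hG hV (infinite_neighbors_of_forall_unitDirs (hdeg _) (hG v))
  -- `key x` records the direction `w x` and the line through `x` in that direction; on `[-4, 4]²`
  -- it takes at most `4 * 17 < 81` values
  let key : ℤ × ℤ → (ℤ × ℤ) × ℤ := fun x => (w x, x.1 * (w x).2 - x.2 * (w x).1)
  have hmaps : MapsTo key (Finset.Icc (-4) 4 ×ˢ Finset.Icc (-4) 4 : Finset (ℤ × ℤ))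
      (diagDirs ×ˢ Finset.Icc (-8) 8 : Finset _) := by
    intro x hx
    simp only [Finset.coe_product, mem_prod, Finset.coe_Icc, mem_Icc] at hx ⊢
    refine ⟨hw x, ?_⟩
    rcases mem_diagDirs.1 (hw x) with ⟨h1 | h1, h2 | h2⟩ <;> simp only [key, h1, h2] <;> omega
  obtain ⟨x, -, z, -, hxz, hkey⟩ := Finset.exists_ne_map_eq_of_card_lt_of_maps_to (by decide) hmaps
  simp only [key, Prod.mk.injEq] at hkey
  obtain ⟨hwxz, hline⟩ := hkey
  have hsq : (w x).1 * (w x).1 = 1 ∧ (w x).2 * (w x).2 = 1 := by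
    rcases mem_diagDirs.1 (hw x) with ⟨h1 | h1, h2 | h2⟩ <;> simp [h1, h2]
  set δ : ℤ := (z.1 - x.1) * (w x).1
  have hz : z = x + δ • w x := by
    rw [← hwxz] at hline
    ext <;> simp only [δ, Prod.fst_add, Prod.snd_add, Prod.smul_fst, Prod.smul_snd, smul_eq_mul]
    · linear_combination (x.1 - z.1) * hsq.1
    · linear_combination (w x).1 * hline + (x.2 - z.2) * hsq.1
  have hδ : (δ : ℝ) ≠ 0 := by
    rintro hδ
    exact hxz (by rw [hz, Int.cast_eq_zero.1 hδ, zero_smul, add_zero])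
  have hW : latticePt (w x) ≠ 0 := fun h0 => by
    have := congrArg Prod.fst h0
    simp only [latticePt, Prod.fst_zero, Int.cast_eq_zero] at this
    simp [this] at hsq
  have hlong_z := hlong z
  rw [← hwxz, congrArg latticePt hz, latticePt_add, latticePt_smul] at hlong_z
  exact hP.false_of_parallel_long_edges hW hδ (hlong x) hlong_z

end PlaneGraph

lemma nineSet_subset_sqLattice : nineSet ⊆ sqLattice := by
  intro r hr
  refine ⟨⌊r.1⌋, ⌊r.2⌋, ?_⟩
  simp only [nineSet, mem_insert_iff, mem_singleton_iff] at hr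
  rcases hr with rfl | rfl | rfl | rfl | rfl | rfl | rfl | rfl | rfl <;> norm_num

lemma exists_missing_axis_edge {E : ℝ × ℝ → ℝ × ℝ → Prop}
    (hV : ∀ p q, E p q → p ∈ nineSet ∧ q ∈ nineSet) (hdeg : ∀ p, {q | E p q}.ncard ≤ 3) :
    ∃ d ∈ unitDirs, ¬E (latticePt 0) (latticePt d) := by
  by_contra! h
  exact infinite_neighbors_of_forall_unitDirs (g := 0) (hdeg _) (by simpa only [zero_add] using h)
    ((by simp [nineSet] : nineSet.Finite).subset fun q hq => (hV _ _ hq).2)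

theorem stmt_17 :
    -- Finite statement on the 9-point configuration:
    (∀ E : ℝ × ℝ → ℝ × ℝ → Prop,
      (∀ p q, E p q → E q p) →
      (∀ p, ¬ E p p) →
      (∀ p q, E p q → p ∈ nineSet ∧ q ∈ nineSet) →
      PlaneGraph E →
      (∀ p, {q | E p q}.ncard ≤ 3) →
      ∃ p ∈ ({(1, 0), (0, 1), (-1, 0), (0, -1)} : Set (ℝ × ℝ)),
        ¬ E (0, 0) p ∧
        ∀ r ∈ nineSet, r ≠ (0, 0) → r ≠ p →
          1 + Real.sqrt 2 ≤ ed (0, 0) r + ed r p) ∧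
    -- Hence: any plane degree-3 graph on the infinite square lattice has
    -- stretch factor at least 1 + √2.
    (∀ E : ℝ × ℝ → ℝ × ℝ → Prop,
      (∀ p q, E p q → E q p) →
      (∀ p, ¬ E p p) →
      (∀ p q, E p q → p ∈ sqLattice ∧ q ∈ sqLattice) →
      PlaneGraph E →
      (∀ p, {q | E p q}.ncard ≤ 3) →
      ∃ u ∈ sqLattice, ∃ v ∈ sqLattice, u ≠ v ∧
        ∀ xs : List (ℝ × ℝ), IsPath E u v xs →
          (1 + Real.sqrt 2) * ed u v ≤ pathLen xs) := by
  refine ⟨fun E _ _ hV _ hdeg => ?_, fun E _ hirr hV hP hdeg => ?_⟩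
  · obtain ⟨d, hd, hnE⟩ := exists_missing_axis_edge hV hdeg
    have h0 : latticePt 0 = (0, 0) := by simp [latticePt]
    have hd1 := ed_latticePt_add_of_mem_unitDirs 0 hd
    rw [zero_add, h0] at hd1
    rw [h0] at hnE
    refine ⟨latticePt d, ?_, hnE, fun r hr hr0 hrd => ?_⟩
    · simp only [unitDirs, Finset.mem_insert, Finset.mem_singleton] at hd
      rcases hd with rfl | rfl | rfl | rfl <;> simp [latticePt]
    · exact one_add_sqrt_two_le_ed_add_ed (h0 ▸ latticePt_mem_sqLattice 0)
        (latticePt_mem_sqLattice d) (nineSet_subset_sqLattice hr) hd1 hr0 hrd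
  · obtain ⟨g, d, hd, hnE⟩ := hP.exists_missing_grid_edge hV hdeg
    have hgd := ed_latticePt_add_of_mem_unitDirs g hd
    refine ⟨_, latticePt_mem_sqLattice g, _, latticePt_mem_sqLattice (g + d),
      fun h => by rw [h] at hgd; simp [ed] at hgd, fun xs hxs => ?_⟩
    rw [hgd, mul_one]
    exact one_add_sqrt_two_le_pathLen hirr hV (latticePt_mem_sqLattice g)
      (latticePt_mem_sqLattice _) hgd hnE hxs
end
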